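/- Let Y ∈ ℤ^n and let B be a rational subspace of ℝ^n of dimension e with a basis X₁,…,X_e consisting of vectors of ℤ^n. If ‖Y ∧ X₁ ∧ ⋯ ∧ X_e‖ < 1, i.e. if the determinant of the (e+1)×(e+1) Gram matrix of the vectors (Y, X₁, …, X_e) is strictly less than 1, then Y ∈ B. -/

import Mathlib

/-! The Gram matrix of integer vectors has integer entries, so its determinant is an integer;
being nonnegative (the Gram matrix is positive semidefinite) and `< 1`, it vanishes. Hence
`Y, X₁, …, X_e` are linearly dependent, and since the `Xᵢ` are independent, `Y` lies in their
span `B`. -/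

noncomputable section

open Finset Module

/-- A vector of `ℝⁿ` with integer coordinates. -/
def IsIntVec {n : ℕ} (v : EuclideanSpace ℝ (Fin n)) : Prop :=
  ∀ i, ∃ z : ℤ, v i = (z : ℝ)

/-- A rational subspace of `ℝⁿ`: one spanned by vectors with rational coordinates. -/
def IsRationalSubspace {n : ℕ} (B : Submodule ℝ (EuclideanSpace ℝ (Fin n))) : Prop :=
  ∃ s : Set (EuclideanSpace ℝ (Fin n)),
    (∀ v ∈ s, ∀ i, ∃ q : ℚ, v i = (q : ℝ)) ∧ Submodule.span ℝ s = B

/-- `A` is `(e,j)`-irrational: every rational subspace `B` of dimension `e` satisfies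
`dim (A ⊓ B) < j + g(dim A, e, n)` where `g(d,e,n) = max 0 (d+e-n)`. -/
def IsIrrational {n : ℕ} (A : Submodule ℝ (EuclideanSpace ℝ (Fin n))) (e j : ℕ) : Prop :=
  ∀ B : Submodule ℝ (EuclideanSpace ℝ (Fin n)),
    IsRationalSubspace B → finrank ℝ B = e →
      finrank ℝ ↥(A ⊓ B) < j + (finrank ℝ A + e - n)

/-- The angle `ω(X,Y) = ‖X∧Y‖ / (‖X‖·‖Y‖)`. -/
def omegaAngle {n : ℕ} (X Y : EuclideanSpace ℝ (Fin n)) : ℝ :=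
  Real.sqrt (‖X‖ ^ 2 * ‖Y‖ ^ 2 - (inner ℝ X Y : ℝ) ^ 2) / (‖X‖ * ‖Y‖)

/-- First angle `ψ₁(A,B)` between two subspaces. -/
def psiOne {n : ℕ} (A B : Submodule ℝ (EuclideanSpace ℝ (Fin n))) : ℝ :=
  sInf {t | ∃ X ∈ A, X ≠ 0 ∧ ∃ Y ∈ B, Y ≠ 0 ∧ t = omegaAngle X Y}

/-- `‖X₁ ∧ ⋯ ∧ X_e‖`, as the square root of the Gram determinant. -/
def gramNorm {n e : ℕ} (X : Fin e → EuclideanSpace ℝ (Fin n)) : ℝ :=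
  Real.sqrt (Matrix.of fun i j : Fin e => (inner ℝ (X i) (X j) : ℝ)).det

/-- `X` is a `ℤ`-basis of the lattice `B ∩ ℤⁿ`. -/
def IsZBasis {n e : ℕ} (X : Fin e → EuclideanSpace ℝ (Fin n))
    (B : Submodule ℝ (EuclideanSpace ℝ (Fin n))) : Prop :=
  (∀ i, X i ∈ B) ∧ (∀ i, IsIntVec (X i)) ∧ LinearIndependent ℝ X ∧
    ∀ v ∈ B, IsIntVec v → ∃ c : Fin e → ℤ, v = ∑ i, (c i : ℝ) • X i

/-- The height `H(B)` of a rational subspace: the common value of `‖X₁ ∧ ⋯ ∧ X_e‖`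
over `ℤ`-bases of the lattice `B ∩ ℤⁿ`. -/
def height {n : ℕ} (B : Submodule ℝ (EuclideanSpace ℝ (Fin n))) : ℝ :=
  sSup {h | ∃ e : ℕ, ∃ X : Fin e → EuclideanSpace ℝ (Fin n), IsZBasis X B ∧ h = gramNorm X}

/-- The Diophantine exponent `μ_n(A|e)₁ ∈ ℝ ∪ {+∞}`. -/
def diophExp {n : ℕ} (A : Submodule ℝ (EuclideanSpace ℝ (Fin n))) (e : ℕ) : EReal :=
  sSup {x : EReal | ∃ μ : ℝ, x = (μ : ℝ) ∧ 0 < μ ∧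
    {B : Submodule ℝ (EuclideanSpace ℝ (Fin n)) |
      IsRationalSubspace B ∧ finrank ℝ B = e ∧ psiOne A B ≤ height B ^ (-μ)}.Infinite}

theorem IsIntVec.exists_int_inner_eq {n : ℕ} {u v : EuclideanSpace ℝ (Fin n)}
    (hu : IsIntVec u) (hv : IsIntVec v) : ∃ z : ℤ, inner ℝ u v = (z : ℝ) := by
  choose a ha using hu
  choose b hb using hv
  refine ⟨∑ k, b k * a k, ?_⟩
  simp [PiLp.inner_apply, ha, hb]

theorem Matrix.exists_int_det_eq {ι : Type*} [Fintype ι] [DecidableEq ι]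
    (A : Matrix ι ι ℝ) (hA : ∀ i j, ∃ z : ℤ, A i j = (z : ℝ)) : ∃ z : ℤ, A.det = (z : ℝ) := by
  choose Z hZ using hA
  refine ⟨(Matrix.of Z).det, ?_⟩
  have hAZ : A = (Int.castRingHom ℝ).mapMatrix (Matrix.of Z) := Matrix.ext hZ
  rw [hAZ, ← RingHom.map_det, Int.coe_castRingHom]

theorem det_gram_eq_zero_of_isIntVec {n : ℕ} {ι : Type*} [Fintype ι] [DecidableEq ι]
    {v : ι → EuclideanSpace ℝ (Fin n)} (hv : ∀ i, IsIntVec (v i))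
    (hlt : (Matrix.gram ℝ v).det < 1) : (Matrix.gram ℝ v).det = 0 := by
  obtain ⟨z, hz⟩ := (Matrix.gram ℝ v).exists_int_det_eq fun i j ↦
    (hv i).exists_int_inner_eq (hv j)
  have hz_nonneg : 0 ≤ z := by exact_mod_cast hz ▸ (Matrix.posSemidef_gram ℝ v).det_nonneg
  have hz_lt : z < 1 := by exact_mod_cast hz ▸ hlt
  rw [hz, show z = 0 by omega, Int.cast_zero]

theorem mem_span_of_isIntVec_of_det_gram_lt_one {n e : ℕ} {Y : EuclideanSpace ℝ (Fin n)}
    {X : Fin e → EuclideanSpace ℝ (Fin n)} (hY : IsIntVec Y) (hX : ∀ i, IsIntVec (X i))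
    (hXli : LinearIndependent ℝ X)
    (hgram : (Matrix.gram ℝ (Fin.cons Y X : Fin (e + 1) → EuclideanSpace ℝ (Fin n))).det < 1) :
    Y ∈ Submodule.span ℝ (Set.range X) := by
  by_contra hY'
  exact Matrix.det_gram_ne_zero_iff_linearIndependent.mpr
    (linearIndependent_finCons.mpr ⟨hXli, hY'⟩)
    (det_gram_eq_zero_of_isIntVec (Fin.cases hY hX) hgram)

theorem statement10 (n e : ℕ) (Y : EuclideanSpace ℝ (Fin n)) (hY : IsIntVec Y)
    (B : Submodule ℝ (EuclideanSpace ℝ (Fin n)))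
    (X : Fin e → EuclideanSpace ℝ (Fin n))
    (hXint : ∀ i, IsIntVec (X i))
    (hXli : LinearIndependent ℝ X) (hXspan : Submodule.span ℝ (Set.range X) = B)
    (hgram : (Matrix.of fun i j : Fin (e + 1) =>
        (inner ℝ ((Fin.cons Y X : Fin (e + 1) → EuclideanSpace ℝ (Fin n)) i)
          ((Fin.cons Y X : Fin (e + 1) → EuclideanSpace ℝ (Fin n)) j) : ℝ)).det < 1) :
    Y ∈ B :=
  hXspan ▸ mem_span_of_isIntVec_of_det_gram_lt_one hY hXint hXli hgram
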